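/- arXiv:1703.01916 — 3 statements merged into one kernel-verified Lean document; each statement's English description precedes it below -/
import Mathlib

section
/- Let n be a positive integer and x_0 ∈ ℝ^n have all coordinates positive, and set α_b = (x_0)_b / (∑_{j=1}^n (x_0)_j). Then the function g̃(x) = ∏_{b=1}^n (x_b / α_b)^{α_b} is differentiable at x_0 and for every index b its partial derivative at x_0 equals 1; that is, g̃ has the same value and the same (Fréchet) derivative at x_0 as the function g(x) = ∑_{b=1}^n x_b. -/
/-! Writing `S = ∑ j, x0 j`, every factor base `x0 b / α b` equals `S` and the weights sum to `1`,
so the monomial takes the value `S ^ ∑ α = S` at `x0`. Its logarithmic derivative there is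
`∑ b, (α b / x0 b) • proj b = S⁻¹ • ∑ b, proj b`, and multiplying by the value `S` gives the
derivative of the sum. -/

open Finset

theorem HasFDerivAt.finsetProd_of_eq_self_smul {𝕜 ι E 𝔸 : Type*} [NontriviallyNormedField 𝕜]
    [NormedAddCommGroup E] [NormedSpace 𝕜 E] [NormedCommRing 𝔸] [NormedAlgebra 𝕜 𝔸]
    [DecidableEq ι] {u : Finset ι} {g : ι → E → 𝔸} {k : ι → E →L[𝕜] 𝔸} {x : E}
    (hg : ∀ i ∈ u, HasFDerivAt (g i) (g i x • k i) x) :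
    HasFDerivAt (∏ i ∈ u, g i ·) ((∏ i ∈ u, g i x) • ∑ i ∈ u, k i) x := by
  refine (HasFDerivAt.finsetProd hg).congr_fderiv ?_
  rw [smul_sum]
  refine sum_congr rfl fun i hi => ?_
  rw [smul_smul, prod_erase_mul u _ hi]

theorem HasFDerivAt.rpow_const_eq_self_smul {E : Type*} [NormedAddCommGroup E] [NormedSpace ℝ E]
    {f : E → ℝ} {f' : E →L[ℝ] ℝ} {x : E} (p : ℝ) (hf : HasFDerivAt f f' x) (hx : f x ≠ 0) :
    HasFDerivAt (fun y => f y ^ p) (f x ^ p • (p / f x) • f') x := by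
  refine (hf.rpow_const (Or.inl hx)).congr_fderiv ?_
  rw [smul_smul, Real.rpow_sub_one hx]
  ring_nf

theorem hasFDerivAt_rpow_apply_div {ι : Type*} [Fintype ι] {x : ι → ℝ} {b : ι} {c : ℝ}
    (p : ℝ) (hx : x b ≠ 0) (hc : c ≠ 0) :
    HasFDerivAt (fun y : ι → ℝ => (y b / c) ^ p)
      ((x b / c) ^ p • (p / x b) • (ContinuousLinearMap.proj b : (ι → ℝ) →L[ℝ] ℝ)) x := by
  have hdiv : HasFDerivAt (fun y : ι → ℝ => y b / c)
      (c⁻¹ • (ContinuousLinearMap.proj b : (ι → ℝ) →L[ℝ] ℝ)) x := by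
    simpa only [div_eq_mul_inv] using (hasFDerivAt_apply b x).mul_const c⁻¹
  refine (hdiv.rpow_const_eq_self_smul p (div_ne_zero hx hc)).congr_fderiv ?_
  rw [smul_smul, smul_smul, smul_smul]
  congr 1
  field_simp

/-- First-order tightness in Lemma 3 (specialized to `u b x = x b`): with weights
`α b = (x0 b) / ∑ j, x0 j`, the monomial `g̃ x = ∏ b, (x b / α b) ^ (α b)` is
differentiable at `x0`, has the same value there as `g x = ∑ b, x b`, and has the same
Fréchet derivative, namely the linear functional `v ↦ ∑ b, v b` (all partial
derivatives equal to `1`). -/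
theorem monomial_best_first_order_approx (n : ℕ) (hn : 0 < n) (x0 : Fin n → ℝ)
    (hx0 : ∀ b, 0 < x0 b) (α : Fin n → ℝ) (hα : ∀ b, α b = x0 b / ∑ j, x0 j) :
    (∏ b, (x0 b / α b) ^ (α b) = ∑ b, x0 b) ∧
    HasFDerivAt (fun x : Fin n → ℝ => ∏ b, (x b / α b) ^ (α b))
      ((∑ b, ContinuousLinearMap.proj b : (Fin n → ℝ) →L[ℝ] ℝ)) x0 ∧
    HasFDerivAt (fun x : Fin n → ℝ => ∑ b, x b)
      ((∑ b, ContinuousLinearMap.proj b : (Fin n → ℝ) →L[ℝ] ℝ)) x0 := by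
  set S := ∑ j, x0 j
  have hS : 0 < S := sum_pos (fun j _ => hx0 j) ⟨⟨0, hn⟩, mem_univ _⟩
  have hα0 : ∀ b, α b ≠ 0 := fun b => by rw [hα b]; exact (div_pos (hx0 b) hS).ne'
  have hratio : ∀ b, x0 b / α b = S := fun b => by rw [hα b]; field_simp [(hx0 b).ne']
  have hαsum : ∑ b, α b = 1 := by
    simp only [hα, ← sum_div]
    exact div_self hS.ne'
  have hval : ∏ b, (x0 b / α b) ^ (α b) = S := by
    simp only [hratio, ← Real.rpow_sum_of_pos hS, hαsum, Real.rpow_one]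
  refine ⟨hval, ?_, .fun_sum fun b _ => hasFDerivAt_apply b x0⟩
  have hprod := HasFDerivAt.finsetProd_of_eq_self_smul (u := univ) fun b _ =>
    hasFDerivAt_rpow_apply_div (α b) (hx0 b).ne' (hα0 b)
  refine hprod.congr_fderiv ?_
  rw [hval, smul_sum]
  refine sum_congr rfl fun b _ => ?_
  have hcoef : S * (α b / x0 b) = 1 := by rw [hα b]; field_simp [(hx0 b).ne']
  rw [smul_smul, hcoef, one_smul]
end

section
/- Fix a user (l,k) ∈ S and positive weights α_{l,k}^1, …, α_{l,k}^{τ_p} with ∑_{b=1}^{τ_p} α_{l,k}^b = 1, and suppose all pilot powers p̂_{l,k}^b are positive. Let SINR-tilde_{l,k} denote the expression obtained from SINR_{l,k} by replacing the factor (∑_{b=1}^{τ_p} p̂_{l,k}^b)² in the numerator by ∏_{b=1}^{τ_p} (p̂_{l,k}^b / α_{l,k}^b)^{2 α_{l,k}^b}. Then SINR_{l,k} ≥ SINR-tilde_{l,k}. -/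
open Finset

/-- The UL SINR of user `lk = (l,k)` from (23), as a function of all pilot powers
`phat`. The large-scale fading coefficients `β it = β_{i,t}^l` and data powers
`p it = p_{i,t}` are with respect to the fixed BS `l` of user `lk`. Division by zero
yields `0` in `ℝ`, matching the paper's convention that the ratio is `0` when its
denominator vanishes. -/
noncomputable def SINR (L K τp : ℕ) (M σ : ℝ) (β p : Fin L × Fin K → ℝ)
    (lk : Fin L × Fin K) (phat : Fin L × Fin K → Fin τp → ℝ) : ℝ :=
  M * (β lk) ^ 2 * p lk * (∑ b, phat lk b) ^ 2 /
    ((∑ it, β it * (∑ b, Real.sqrt (phat it b * phat lk b)) ^ 2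
        + σ ^ 2 * ∑ b, phat lk b)
      * (∑ it, p it * β it + σ ^ 2)
      + M * ∑ it ∈ univ.erase lk, p it * (β it) ^ 2
          * (∑ b, Real.sqrt (phat it b * phat lk b)) ^ 2)

/-- The lower bound `SINR-tilde` from (31): the factor `(∑ b, phat lk b)²` in the
numerator of `SINR` is replaced by the monomial `∏ b, (phat lk b / α b) ^ (2 * α b)`
(real powers). -/
noncomputable def SINRtilde (L K τp : ℕ) (M σ : ℝ) (β p : Fin L × Fin K → ℝ)
    (lk : Fin L × Fin K) (α : Fin τp → ℝ)
    (phat : Fin L × Fin K → Fin τp → ℝ) : ℝ :=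
  M * (β lk) ^ 2 * p lk * (∏ b, (phat lk b / α b) ^ (2 * α b)) /
    ((∑ it, β it * (∑ b, Real.sqrt (phat it b * phat lk b)) ^ 2
        + σ ^ 2 * ∑ b, phat lk b)
      * (∑ it, p it * β it + σ ^ 2)
      + M * ∑ it ∈ univ.erase lk, p it * (β it) ^ 2
          * (∑ b, Real.sqrt (phat it b * phat lk b)) ^ 2)

/-- The bound (31) ≤ (23): for positive weights `α` summing to one and positive pilot
powers of user `lk`, `SINR-tilde_{l,k} ≤ SINR_{l,k}`. -/
theorem SINRtilde_le_SINR (L K τp : ℕ) (hL : 0 < L) (hK : 0 < K) (hτ : 1 ≤ τp)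
    (M σ : ℝ) (hM : 0 < M) (hσ : 0 < σ)
    (β p : Fin L × Fin K → ℝ) (hβ : ∀ it, 0 < β it) (hp : ∀ it, 0 ≤ p it)
    (lk : Fin L × Fin K)
    (phat : Fin L × Fin K → Fin τp → ℝ) (hphat : ∀ it b, 0 ≤ phat it b)
    (α : Fin τp → ℝ) (hα : ∀ b, 0 < α b) (hαsum : ∑ b, α b = 1)
    (hlk : ∀ b, 0 < phat lk b) :
    SINRtilde L K τp M σ β p lk α phat ≤ SINR L K τp M σ β p lk phat := by
  unfold SINR SINRtilde
  have hkey : (∏ b, (phat lk b / α b) ^ (2 * α b)) ≤ (∑ b, phat lk b) ^ 2 := by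
    have h1 : (∏ b, (phat lk b / α b) ^ (α b)) ≤ ∑ b, α b * (phat lk b / α b) :=
      Real.geom_mean_le_arith_mean_weighted univ α (fun b => phat lk b / α b)
        (fun i _ => (hα i).le) hαsum
        (fun i _ => div_nonneg (hlk i).le (hα i).le)
    have h2 : (∑ b, α b * (phat lk b / α b)) = ∑ b, phat lk b := by
      refine Finset.sum_congr rfl fun b _ => ?_
      rw [mul_comm, div_mul_cancel₀ _ (hα b).ne']
    have h3 : (∏ b, (phat lk b / α b) ^ (2 * α b))
        = (∏ b, (phat lk b / α b) ^ (α b)) ^ 2 := by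
      rw [← Finset.prod_pow]
      refine Finset.prod_congr rfl fun b _ => ?_
      rw [← Real.rpow_natCast ((phat lk b / α b) ^ (α b)) 2,
        ← Real.rpow_mul (div_nonneg (hlk b).le (hα b).le)]
      norm_num [mul_comm]
    have hprodnn : 0 ≤ ∏ b, (phat lk b / α b) ^ (α b) :=
      Finset.prod_nonneg fun b _ =>
        Real.rpow_nonneg (div_nonneg (hlk b).le (hα b).le) _
    rw [h3]
    exact pow_le_pow_left₀ hprodnn (h1.trans h2.le) 2
  have hnum : 0 ≤ M * (β lk) ^ 2 * p lk :=
    mul_nonneg (mul_nonneg hM.le (sq_nonneg _)) (hp lk)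
  gcongr
  · have h1 : 0 ≤ ∑ it, β it * (∑ b, Real.sqrt (phat it b * phat lk b)) ^ 2 :=
      Finset.sum_nonneg fun it _ => mul_nonneg (hβ it).le (sq_nonneg _)
    have h2 : 0 < σ ^ 2 * ∑ b, phat lk b :=
      mul_pos (pow_pos hσ 2) (Finset.sum_pos (fun b _ => hlk b)
        (Finset.univ_nonempty_iff.mpr ⟨⟨0, hτ⟩⟩))
    have h3 : 0 < ∑ it, p it * β it + σ ^ 2 :=
      add_pos_of_nonneg_of_pos
        (Finset.sum_nonneg fun it _ => mul_nonneg (hp it) (hβ it).le) (pow_pos hσ 2)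
    have h4 : 0 ≤ M * ∑ it ∈ univ.erase lk, p it * (β it) ^ 2
        * (∑ b, Real.sqrt (phat it b * phat lk b)) ^ 2 :=
      mul_nonneg hM.le (Finset.sum_nonneg fun it _ =>
        mul_nonneg (mul_nonneg (hp it) (sq_nonneg _)) (sq_nonneg _))
    have := mul_pos (add_pos_of_nonneg_of_pos h1 h2) h3
    linarith
end

section
/- For each fixed user (l,k) ∈ S, the map sending the family of pilot powers (p̂_{i,t}^b)_{(i,t)∈S, 1≤b≤τ_p} (ranging over the nonnegative orthant of ℝ^{L·K·τ_p}) to SINR_{l,k} is continuous on the nonnegative orthant, provided σ > 0, β_{i,t}^l > 0 for all (i,t) ∈ S, p_{i,t} ≥ 0 for all (i,t) ∈ S, and M > 0. In particular, at points where ∑_{b=1}^{τ_p} p̂_{l,k}^b = 0 (where the denominator vanishes and the value is 0 by convention) the function is continuous with value 0. -/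
open Finset

section aux

variable {L K τp : ℕ} {M σ : ℝ} {β p : Fin L × Fin K → ℝ} {lk : Fin L × Fin K}

/-- Numerator of the SINR. -/
noncomputable def SINRnum (L K τp : ℕ) (M : ℝ) (β p : Fin L × Fin K → ℝ)
    (lk : Fin L × Fin K) (phat : Fin L × Fin K → Fin τp → ℝ) : ℝ :=
  M * (β lk) ^ 2 * p lk * (∑ b, phat lk b) ^ 2

/-- Denominator of the SINR. -/
noncomputable def SINRden (L K τp : ℕ) (M σ : ℝ) (β p : Fin L × Fin K → ℝ)
    (lk : Fin L × Fin K) (phat : Fin L × Fin K → Fin τp → ℝ) : ℝ :=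
  (∑ it, β it * (∑ b, Real.sqrt (phat it b * phat lk b)) ^ 2
      + σ ^ 2 * ∑ b, phat lk b)
    * (∑ it, p it * β it + σ ^ 2)
    + M * ∑ it ∈ univ.erase lk, p it * (β it) ^ 2
        * (∑ b, Real.sqrt (phat it b * phat lk b)) ^ 2

lemma SINR_eq (phat : Fin L × Fin K → Fin τp → ℝ) :
    SINR L K τp M σ β p lk phat =
      SINRnum L K τp M β p lk phat / SINRden L K τp M σ β p lk phat := rfl

lemma SINRnum_continuous :
    Continuous fun phat : Fin L × Fin K → Fin τp → ℝ =>
      SINRnum L K τp M β p lk phat := by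
  unfold SINRnum
  fun_prop

lemma SINRden_continuous :
    Continuous fun phat : Fin L × Fin K → Fin τp → ℝ =>
      SINRden L K τp M σ β p lk phat := by
  unfold SINRden
  fun_prop

lemma SINRden_ge (hM : 0 < M) (hσ : 0 < σ) (hβ : ∀ it, 0 < β it) (hp : ∀ it, 0 ≤ p it)
    (phat : Fin L × Fin K → Fin τp → ℝ) (hphat : ∀ it b, 0 ≤ phat it b) :
    σ ^ 4 * (∑ b, phat lk b) ≤ SINRden L K τp M σ β p lk phat := by
  have hS : (0:ℝ) ≤ ∑ b, phat lk b := Finset.sum_nonneg fun b _ => hphat lk b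
  have hA : (0:ℝ) ≤ ∑ it, β it * (∑ b, Real.sqrt (phat it b * phat lk b)) ^ 2 :=
    Finset.sum_nonneg fun it _ => mul_nonneg (hβ it).le (sq_nonneg _)
  have hB : (0:ℝ) ≤ ∑ it, p it * β it :=
    Finset.sum_nonneg fun it _ => mul_nonneg (hp it) (hβ it).le
  have hC : (0:ℝ) ≤ ∑ it ∈ univ.erase lk, p it * (β it) ^ 2
      * (∑ b, Real.sqrt (phat it b * phat lk b)) ^ 2 :=
    Finset.sum_nonneg fun it _ => mul_nonneg (mul_nonneg (hp it) (sq_nonneg _)) (sq_nonneg _)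
  unfold SINRden
  nlinarith [sq_nonneg σ, mul_nonneg hA hB, mul_nonneg (mul_nonneg hS (sq_nonneg σ)) hB,
    mul_nonneg hA (sq_nonneg σ), mul_pos hσ hσ, mul_nonneg hM.le hC]

lemma SINRden_nonneg (hM : 0 < M) (hσ : 0 < σ) (hβ : ∀ it, 0 < β it) (hp : ∀ it, 0 ≤ p it)
    (phat : Fin L × Fin K → Fin τp → ℝ) (hphat : ∀ it b, 0 ≤ phat it b) :
    0 ≤ SINRden L K τp M σ β p lk phat := by
  have hS : (0:ℝ) ≤ ∑ b, phat lk b := Finset.sum_nonneg fun b _ => hphat lk b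
  have := SINRden_ge (lk := lk) hM hσ hβ hp phat hphat
  nlinarith [pow_pos hσ 4]

lemma SINRnum_nonneg (hM : 0 < M) (hp : ∀ it, 0 ≤ p it)
    (phat : Fin L × Fin K → Fin τp → ℝ) :
    0 ≤ SINRnum L K τp M β p lk phat :=
  mul_nonneg (mul_nonneg (mul_nonneg hM.le (sq_nonneg _)) (hp lk)) (sq_nonneg _)

end aux

/-- For each fixed user `lk`, the map sending the family of pilot powers `phat`
(ranging over the nonnegative orthant) to `SINR_{l,k}` is continuous on the
nonnegative orthant — in particular, it is continuous (with value `0`) at points where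
`∑ b, phat lk b = 0` and the denominator vanishes. -/
theorem SINR_continuousOn (L K τp : ℕ) (hL : 0 < L) (hK : 0 < K) (hτ : 1 ≤ τp)
    (M σ : ℝ) (hM : 0 < M) (hσ : 0 < σ)
    (β p : Fin L × Fin K → ℝ) (hβ : ∀ it, 0 < β it) (hp : ∀ it, 0 ≤ p it)
    (lk : Fin L × Fin K) :
    ContinuousOn (fun phat : Fin L × Fin K → Fin τp → ℝ =>
        SINR L K τp M σ β p lk phat)
      {phat | ∀ it b, 0 ≤ phat it b} := by
  intro x hx
  have hxset : ∀ it b, 0 ≤ x it b := hx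
  have hσ4 : (0:ℝ) < σ ^ 4 := pow_pos hσ 4
  have hSx : (0:ℝ) ≤ ∑ b, x lk b := Finset.sum_nonneg fun b _ => hxset lk b
  rcases eq_or_lt_of_le hSx with hS0 | hSpos
  · -- degenerate point: denominator may vanish; squeeze to 0
    -- value at x is 0
    have hxval : SINR L K τp M σ β p lk x = 0 := by
      rw [SINR_eq]
      have : SINRnum L K τp M β p lk x = 0 := by
        unfold SINRnum; rw [← hS0]; ring
      rw [this, zero_div]
    have hC0 : (0:ℝ) ≤ M * (β lk) ^ 2 * p lk / σ ^ 4 :=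
      div_nonneg (mul_nonneg (mul_nonneg hM.le (sq_nonneg _)) (hp lk)) hσ4.le
    -- upper bound on the set
    have hub : ∀ y ∈ {phat : Fin L × Fin K → Fin τp → ℝ | ∀ it b, 0 ≤ phat it b},
        SINR L K τp M σ β p lk y ≤ (M * (β lk) ^ 2 * p lk / σ ^ 4) * ∑ b, y lk b := by
      intro y hy
      have hyS : (0:ℝ) ≤ ∑ b, y lk b := Finset.sum_nonneg fun b _ => hy lk b
      have hd := SINRden_ge (lk := lk) hM hσ hβ hp y hy
      have hdn := SINRden_nonneg (lk := lk) hM hσ hβ hp y hy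
      rcases eq_or_lt_of_le hdn with hd0 | hdpos
      · rw [SINR_eq, ← hd0, div_zero]
        exact mul_nonneg hC0 hyS
      · rw [SINR_eq, div_le_iff₀ hdpos]
        have h1 : (M * (β lk) ^ 2 * p lk / σ ^ 4) * (∑ b, y lk b) * (σ ^ 4 * ∑ b, y lk b)
            ≤ (M * (β lk) ^ 2 * p lk / σ ^ 4) * (∑ b, y lk b) * SINRden L K τp M σ β p lk y :=
          mul_le_mul_of_nonneg_left hd (mul_nonneg hC0 hyS)
        have h2 : (M * (β lk) ^ 2 * p lk / σ ^ 4) * (∑ b, y lk b) * (σ ^ 4 * ∑ b, y lk b)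
            = SINRnum L K τp M β p lk y := by
          unfold SINRnum; field_simp
        linarith
    have hlb : ∀ y ∈ {phat : Fin L × Fin K → Fin τp → ℝ | ∀ it b, 0 ≤ phat it b},
        (0:ℝ) ≤ SINR L K τp M σ β p lk y := by
      intro y hy
      exact div_nonneg (SINRnum_nonneg (lk := lk) hM hp y)
        (SINRden_nonneg (lk := lk) hM hσ hβ hp y hy)
    rw [ContinuousWithinAt, hxval]
    have hbig : Filter.Tendsto
        (fun y : Fin L × Fin K → Fin τp → ℝ =>
          (M * (β lk) ^ 2 * p lk / σ ^ 4) * ∑ b, y lk b)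
        (nhdsWithin x {phat | ∀ it b, 0 ≤ phat it b}) (nhds 0) := by
      have hc : Continuous (fun y : Fin L × Fin K → Fin τp → ℝ =>
          (M * (β lk) ^ 2 * p lk / σ ^ 4) * ∑ b, y lk b) := by fun_prop
      have := (hc.continuousWithinAt (s := {phat | ∀ it b, 0 ≤ phat it b}) (x := x))
      rw [ContinuousWithinAt] at this
      convert this using 2
      rw [← hS0, mul_zero]
    refine tendsto_of_tendsto_of_tendsto_of_le_of_le' tendsto_const_nhds hbig ?_ ?_
    · exact Filter.eventually_iff_exists_mem.mpr
        ⟨_, self_mem_nhdsWithin, fun y hy => hlb y hy⟩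
    · exact Filter.eventually_iff_exists_mem.mpr
        ⟨_, self_mem_nhdsWithin, fun y hy => hub y hy⟩
  · -- nondegenerate point: denominator positive at x
    have hdpos : 0 < SINRden L K τp M σ β p lk x := by
      have := SINRden_ge (lk := lk) hM hσ hβ hp x hxset
      nlinarith
    have hnc := (SINRnum_continuous (L := L) (K := K) (τp := τp) (M := M)
      (β := β) (p := p) (lk := lk)).continuousWithinAt
      (s := {phat | ∀ it b, 0 ≤ phat it b}) (x := x)
    have hdc := (SINRden_continuous (L := L) (K := K) (τp := τp) (M := M) (σ := σ)
      (β := β) (p := p) (lk := lk)).continuousWithinAt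
      (s := {phat | ∀ it b, 0 ≤ phat it b}) (x := x)
    exact hnc.div hdc hdpos.ne'
end
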